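/- arXiv:0802.2800 — 3 statements merged into one kernel-verified Lean document; each statement's English description precedes it below -/
import Mathlib

section
/- Let Y and C be independent real random variables with C having continuous survival function Ḡ(t) = P(C > t), and let T = min(Y, C), δ = 1_{Y ≤ C}. If Ḡ(Y) > 0 almost surely, then E[δ·T/Ḡ(T)] = E[Y]. -/
open MeasureTheory ProbabilityTheory Set Filter

/-! If `Y ⟂ C`, then conditionally on `Y = y` the censoring indicator `1_{y ≤ C}` has mean
`P(C ≥ y)`, which equals `Ḡ(y)` because a continuous survival function has no atoms. Hence the
weight `δ / Ḡ(T) = 1_{Y ≤ C} / Ḡ(Y)` has conditional mean one, and Fubini on the joint law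
`law Y ⊗ law C` gives the identity. Through Fubini–Tonelli the same computation shows that
`δ T / Ḡ(T)` is integrable exactly when `Y` is, so both sides are junk `0` together otherwise. -/

lemma measureReal_Ici_eq_measureReal_Ioi {ν : Measure ℝ} [IsFiniteMeasure ν] {y : ℝ}
    (h : ContinuousWithinAt (fun t => ν.real (Ioi t)) (Iio y) y) :
    ν.real (Ici y) = ν.real (Ioi y) := by
  refine le_antisymm (ge_of_tendsto h ?_) (measureReal_mono Ioi_subset_Ici_self)
  filter_upwards [self_mem_nhdsWithin] with t (ht : t < y)
  exact measureReal_mono fun c (hc : y ≤ c) => ht.trans_le hc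

/-- `δ T / Ḡ(T)` at `Y = y, C = c`, with `Ḡ(y)` replaced by `ν [y, ∞)` for the law `ν` of `C`. -/
noncomputable def ipcw (ν : Measure ℝ) (y c : ℝ) : ℝ :=
  if y ≤ c then y / ν.real (Ici y) else 0

namespace ipcw

variable {μ ν : Measure ℝ}

lemma eq_indicator (y : ℝ) :
    ipcw ν y = (Ici y).indicator fun _ => y / ν.real (Ici y) := by
  ext c
  simp [ipcw, indicator, mem_Ici]

lemma integral_right {y : ℝ} (hy : 0 < ν.real (Ici y)) :
    ∫ c, ipcw ν y c ∂ν = y := by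
  rw [eq_indicator, integral_indicator_const _ measurableSet_Ici, smul_eq_mul,
    mul_div_cancel₀ _ hy.ne']

lemma integral_norm_right {y : ℝ} (hy : 0 < ν.real (Ici y)) :
    ∫ c, ‖ipcw ν y c‖ ∂ν = ‖y‖ := by
  simp_rw [eq_indicator, norm_indicator_eq_indicator_norm]
  rw [integral_indicator_const _ measurableSet_Ici, smul_eq_mul, norm_div,
    Real.norm_of_nonneg hy.le, mul_div_cancel₀ _ hy.ne']

variable [IsFiniteMeasure ν]

lemma measurable_uncurry : Measurable (Function.uncurry (ipcw ν)) := by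
  have hG : Measurable fun y => ν.real (Ici y) :=
    Antitone.measurable fun _ _ hyz => measureReal_mono (Ici_subset_Ici.2 hyz)
  exact Measurable.ite (measurableSet_le measurable_fst measurable_snd)
    (measurable_fst.div (hG.comp measurable_fst)) measurable_const

lemma integrable_iff (hpos : ∀ᵐ y ∂μ, 0 < ν.real (Ici y)) :
    Integrable (Function.uncurry (ipcw ν)) (μ.prod ν) ↔ Integrable (fun y : ℝ => y) μ := by
  have hsection (y : ℝ) : Integrable (ipcw ν y) ν := by
    rw [eq_indicator]
    exact (integrable_const _).indicator measurableSet_Ici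
  rw [integrable_prod_iff measurable_uncurry.aestronglyMeasurable,
    ← integrable_norm_iff (f := fun y : ℝ => y) aestronglyMeasurable_id]
  simp only [Function.uncurry_apply_pair, hsection, eventually_true, true_and]
  exact integrable_congr (hpos.mono fun y hy => integral_norm_right hy)

lemma integral_prod_eq [SFinite μ] (hpos : ∀ᵐ y ∂μ, 0 < ν.real (Ici y)) :
    ∫ p, Function.uncurry (ipcw ν) p ∂(μ.prod ν) = ∫ y, y ∂μ := by
  by_cases hint : Integrable (Function.uncurry (ipcw ν)) (μ.prod ν)
  · rw [integral_prod _ hint]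
    exact integral_congr_ae (hpos.mono fun y hy => integral_right hy)
  · have hY : ¬ Integrable (fun y : ℝ => y) μ := (integrable_iff hpos).not.1 hint
    rw [integral_undef hint, integral_undef hY]

end ipcw

theorem stmt0_general {Ω : Type*} [MeasureSpace Ω] [IsProbabilityMeasure (ℙ : Measure Ω)]
    (Y C : Ω → ℝ) (hY : Measurable Y) (hC : Measurable C)
    (hind : IndepFun Y C ℙ)
    (G : ℝ → ℝ) (hG : ∀ t, G t = (ℙ {ω | t < C ω}).toReal)
    (hGcont : Continuous G)
    (hpos : ∀ᵐ ω ∂ℙ, 0 < G (Y ω)) :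
    ∫ ω, (if Y ω ≤ C ω then (1 : ℝ) else 0) * min (Y ω) (C ω) / G (min (Y ω) (C ω)) ∂ℙ
      = ∫ ω, Y ω ∂ℙ := by
  set ν := (ℙ : Measure Ω).map C
  have hG_Ioi : G = fun t => ν.real (Ioi t) := by
    ext t
    rw [hG, measureReal_def, Measure.map_apply hC measurableSet_Ioi]
    rfl
  have hG_Ici (y : ℝ) : G y = ν.real (Ici y) := by
    rw [measureReal_Ici_eq_measureReal_Ioi (hG_Ioi ▸ hGcont.continuousWithinAt), hG_Ioi]
  have hposν : ∀ᵐ y ∂(ℙ : Measure Ω).map Y, 0 < ν.real (Ici y) := by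
    simpa only [hG_Ici] using
      (ae_map_iff hY.aemeasurable (measurableSet_lt measurable_const hGcont.measurable)).2 hpos
  have hintegrand (ω : Ω) : (if Y ω ≤ C ω then (1 : ℝ) else 0) * min (Y ω) (C ω) /
      G (min (Y ω) (C ω)) = ipcw ν (Y ω) (C ω) := by
    by_cases h : Y ω ≤ C ω <;> simp [ipcw, h, hG_Ici]
  have hjoint : (ℙ : Measure Ω).map (fun ω => (Y ω, C ω)) = ((ℙ : Measure Ω).map Y).prod ν :=
    (indepFun_iff_map_prod_eq_prod_map_map hY.aemeasurable hC.aemeasurable).1 hind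
  calc ∫ ω, (if Y ω ≤ C ω then (1 : ℝ) else 0) * min (Y ω) (C ω) / G (min (Y ω) (C ω)) ∂ℙ
      = ∫ p, Function.uncurry (ipcw ν) p ∂((ℙ : Measure Ω).map Y).prod ν := by
        rw [← hjoint, integral_map (hY.prodMk hC).aemeasurable
          ipcw.measurable_uncurry.aestronglyMeasurable]
        exact integral_congr_ae (.of_forall hintegrand)
    _ = ∫ y, y ∂(ℙ : Measure Ω).map Y := ipcw.integral_prod_eq hposν
    _ = ∫ ω, Y ω ∂ℙ := integral_map hY.aemeasurable aestronglyMeasurable_id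

/-- Unbiasedness of inverse-probability-of-censoring weighting:
if `Y ⟂ C`, `Ḡ(t) = P(C > t)` is continuous, `T = min(Y,C)`, `δ = 1_{Y ≤ C}`,
and `Ḡ(Y) > 0` a.s., then `E[δ T / Ḡ(T)] = E[Y]`. -/
theorem stmt0 {Ω : Type*} [MeasureSpace Ω] [IsProbabilityMeasure (ℙ : Measure Ω)]
    (Y C : Ω → ℝ) (hY : Measurable Y) (hC : Measurable C)
    (hind : IndepFun Y C ℙ)
    (G : ℝ → ℝ) (hG : ∀ t, G t = (ℙ {ω | t < C ω}).toReal)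
    (hGcont : Continuous G)
    (hpos : ∀ᵐ ω ∂ℙ, 0 < G (Y ω))
    (hYint : Integrable Y ℙ)
    (hint : Integrable (fun ω =>
      (if Y ω ≤ C ω then (1 : ℝ) else 0) * min (Y ω) (C ω) / G (min (Y ω) (C ω))) ℙ) :
    ∫ ω, (if Y ω ≤ C ω then (1 : ℝ) else 0) * min (Y ω) (C ω) / G (min (Y ω) (C ω)) ∂ℙ
      = ∫ ω, Y ω ∂ℙ :=
  stmt0_general Y C hY hC hind G hG hGcont hpos
end

section
/- Let Y and C be independent real random variables with C having continuous survival function Ḡ, let T = Y ∧ C, δ = 1_{Y ≤ C}, and let X be a random vector such that C is independent of (X, Y). If Ḡ(Y) > 0 almost surely, then the conditional expectation E[δ·T/Ḡ(T) | X] equals E[Y | X] almost surely. -/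
/-!
Integrating out `C` first (Fubini for the product law of `((X, Y), C)`) replaces the indicator
`1_{Y ≤ C}` by `P(C ≥ Y) = Ḡ(Y)`, where the equality holds because a continuous `Ḡ` leaves `C`
without atoms; this cancels the weight `1 / Ḡ(Y)`. Hence `E[1_B(X) δ T / Ḡ(T)] = E[1_B(X) Y]`
for every Borel set `B`, which characterises the conditional expectation given `X`.
-/

open MeasureTheory ProbabilityTheory Set

section

variable {Ω : Type*} [MeasurableSpace Ω] {μ : Measure Ω} [IsFiniteMeasure μ]
  {Y C : Ω → ℝ} {G : ℝ → ℝ}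

lemma measureReal_le_eq_measureReal_lt {y : ℝ}
    (hcont : ContinuousWithinAt (fun t => μ.real {ω | t < C ω}) (Iio y) y) :
    μ.real {ω | y ≤ C ω} = μ.real {ω | y < C ω} := by
  refine le_antisymm (ge_of_tendsto hcont ?_) (measureReal_mono fun ω (h : y < C ω) => h.le)
  filter_upwards [self_mem_nhdsWithin] with t (ht : t < y)
  exact measureReal_mono fun ω (h : y ≤ C ω) => ht.trans_le h

theorem ProbabilityTheory.IndepFun.integral_comp_eq_integral_integral {β γ E : Type*}
    [MeasurableSpace β] [MeasurableSpace γ] [NormedAddCommGroup E] [NormedSpace ℝ E]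
    {U : Ω → β} {V : Ω → γ} (hind : IndepFun U V μ) (hU : AEMeasurable U μ)
    (hV : AEMeasurable V μ) {g : β × γ → E} (hg : StronglyMeasurable g)
    (hint : Integrable (fun ω => g (U ω, V ω)) μ) :
    ∫ ω, g (U ω, V ω) ∂μ = ∫ u, ∫ v, g (u, v) ∂(μ.map V) ∂(μ.map U) := by
  have hUV : AEMeasurable (fun ω => (U ω, V ω)) μ := hU.prodMk hV
  have hmap := (indepFun_iff_map_prod_eq_prod_map_map hU hV).mp hind
  have hint' : Integrable g ((μ.map U).prod (μ.map V)) := by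
    rwa [← hmap, integrable_map_measure hg.aestronglyMeasurable hUV]
  rw [← integral_prod g hint', ← hmap, integral_map hUV hg.aestronglyMeasurable]

theorem integral_ite_le_div_eq_integral_of_indepFun {V : Ω → ℝ} (hV : Measurable V)
    (hY : Measurable Y) (hC : Measurable C) (hind : IndepFun (fun ω => (V ω, Y ω)) C μ)
    (hG : ∀ t, μ.real {ω | t ≤ C ω} = G t) (hpos : ∀ᵐ ω ∂μ, 0 < G (Y ω))
    (hint : Integrable (fun ω => if Y ω ≤ C ω then V ω / G (Y ω) else 0) μ) :
    ∫ ω, (if Y ω ≤ C ω then V ω / G (Y ω) else 0) ∂μ = ∫ ω, V ω ∂μ := by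
  have hGmeas : Measurable G :=
    Antitone.measurable fun s t hst => by
      rw [← hG, ← hG]
      exact measureReal_mono fun ω (h : t ≤ C ω) => hst.trans h
  have hVY : Measurable fun ω => (V ω, Y ω) := hV.prodMk hY
  have hg : Measurable fun q : (ℝ × ℝ) × ℝ => if q.1.2 ≤ q.2 then q.1.1 / G q.1.2 else 0 :=
    Measurable.ite (measurableSet_le (by fun_prop) (by fun_prop)) (by fun_prop) measurable_const
  have hinner (p : ℝ × ℝ) :
      ∫ c, (if p.2 ≤ c then p.1 / G p.2 else 0) ∂(μ.map C) = p.1 / G p.2 * G p.2 := by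
    have hIci : (μ.map C).real (Ici p.2) = G p.2 := by
      rw [map_measureReal_apply hC measurableSet_Ici, ← hG]
      rfl
    have hindicator : (fun c => if p.2 ≤ c then p.1 / G p.2 else 0)
        = (Ici p.2).indicator fun _ => p.1 / G p.2 := by
      ext c
      simp [indicator_apply]
    rw [hindicator, integral_indicator_const _ measurableSet_Ici, hIci, smul_eq_mul, mul_comm]
  have hposmap : ∀ᵐ p ∂(μ.map fun ω => (V ω, Y ω)), 0 < G p.2 :=
    (ae_map_iff hVY.aemeasurable (measurableSet_lt measurable_const (by fun_prop))).mpr hpos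
  calc ∫ ω, (if Y ω ≤ C ω then V ω / G (Y ω) else 0) ∂μ
      = ∫ p, p.1 / G p.2 * G p.2 ∂(μ.map fun ω => (V ω, Y ω)) := by
        rw [hind.integral_comp_eq_integral_integral hVY.aemeasurable hC.aemeasurable
          hg.stronglyMeasurable hint]
        simp_rw [hinner]
    _ = ∫ p, p.1 ∂(μ.map fun ω => (V ω, Y ω)) :=
        integral_congr_ae (hposmap.mono fun p hp => div_mul_cancel₀ _ hp.ne')
    _ = ∫ ω, V ω ∂μ := integral_map hVY.aemeasurable (by fun_prop)

theorem setIntegral_preimage_ite_le_div_eq_of_indepFun {β : Type*} [MeasurableSpace β]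
    {X : Ω → β} (hX : Measurable X) (hY : Measurable Y) (hC : Measurable C)
    (hind : IndepFun (fun ω => (X ω, Y ω)) C μ) (hG : ∀ t, μ.real {ω | t ≤ C ω} = G t)
    (hpos : ∀ᵐ ω ∂μ, 0 < G (Y ω))
    (hint : Integrable (fun ω => if Y ω ≤ C ω then Y ω / G (Y ω) else 0) μ)
    {B : Set β} (hB : MeasurableSet B) :
    ∫ ω in X ⁻¹' B, (if Y ω ≤ C ω then Y ω / G (Y ω) else 0) ∂μ = ∫ ω in X ⁻¹' B, Y ω ∂μ := by
  have hindB : IndepFun (fun ω => ((X ⁻¹' B).indicator Y ω, Y ω)) C μ := by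
    convert hind.comp (φ := fun p => ((B ×ˢ univ).indicator Prod.snd p, p.2))
      ((measurable_snd.indicator (hB.prod .univ)).prodMk measurable_snd) measurable_id using 1
    · funext ω
      by_cases hω : X ω ∈ B <;> simp [hω]
    · rfl
  have hindicator : (X ⁻¹' B).indicator (fun ω => if Y ω ≤ C ω then Y ω / G (Y ω) else 0)
      = fun ω => if Y ω ≤ C ω then (X ⁻¹' B).indicator Y ω / G (Y ω) else 0 := by
    funext ω
    by_cases hω : X ω ∈ B <;> simp [hω]
  have hintB := hint.indicator (hX hB)
  rw [hindicator] at hintB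
  rw [← integral_indicator (hX hB), ← integral_indicator (hX hB), hindicator]
  exact integral_ite_le_div_eq_integral_of_indepFun (hY.indicator (hX hB)) hY hC hindB hG hpos
    hintB

theorem condExp_ite_le_div_ae_eq_condExp {β : Type*} [MeasurableSpace β] {X : Ω → β}
    (hX : Measurable X) (hY : Measurable Y) (hC : Measurable C)
    (hind : IndepFun (fun ω => (X ω, Y ω)) C μ) (hG : ∀ t, μ.real {ω | t ≤ C ω} = G t)
    (hpos : ∀ᵐ ω ∂μ, 0 < G (Y ω)) (hYint : Integrable Y μ)
    (hint : Integrable (fun ω => if Y ω ≤ C ω then Y ω / G (Y ω) else 0) μ) :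
    μ[fun ω => if Y ω ≤ C ω then Y ω / G (Y ω) else 0 | MeasurableSpace.comap X inferInstance]
      =ᵐ[μ] μ[Y | MeasurableSpace.comap X inferInstance] := by
  refine (ae_eq_condExp_of_forall_setIntegral_eq hX.comap_le hint
    (fun _ _ _ => integrable_condExp.integrableOn) ?_
    stronglyMeasurable_condExp.aestronglyMeasurable).symm
  rintro _ ⟨B, hB, rfl⟩ -
  rw [setIntegral_condExp hX.comap_le hYint ⟨B, hB, rfl⟩,
    setIntegral_preimage_ite_le_div_eq_of_indepFun hX hY hC hind hG hpos hint hB]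

end

/-- In the censored regression model, if `C` is independent of `(X, Y)`, the survival
function `Ḡ(t) = P(C > t)` is continuous and `Ḡ(Y) > 0` a.s., then
`E[δ T / Ḡ(T) | X] = E[Y | X]` a.s., where `T = Y ∧ C` and `δ = 1_{Y ≤ C}`. -/
theorem stmt1 {Ω : Type*} [MeasureSpace Ω] [IsProbabilityMeasure (ℙ : Measure Ω)]
    {d : ℕ} (Y C : Ω → ℝ) (X : Ω → (Fin d → ℝ))
    (hY : Measurable Y) (hC : Measurable C) (hX : Measurable X)
    (hind : IndepFun (fun ω => (X ω, Y ω)) C ℙ)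
    (G : ℝ → ℝ) (hG : ∀ t, G t = (ℙ {ω | t < C ω}).toReal)
    (hGcont : Continuous G)
    (hpos : ∀ᵐ ω ∂ℙ, 0 < G (Y ω))
    (hYint : Integrable Y ℙ)
    (hint : Integrable (fun ω =>
      (if Y ω ≤ C ω then (1 : ℝ) else 0) * min (Y ω) (C ω) / G (min (Y ω) (C ω))) ℙ) :
    (ℙ : Measure Ω)[fun ω =>
        (if Y ω ≤ C ω then (1 : ℝ) else 0) * min (Y ω) (C ω) / G (min (Y ω) (C ω)) |
      MeasurableSpace.comap X inferInstance]
      =ᵐ[ℙ] (ℙ : Measure Ω)[Y | MeasurableSpace.comap X inferInstance] := by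
  have hGreal : G = fun t => (ℙ : Measure Ω).real {ω | t < C ω} := funext hG
  have hGle (t : ℝ) : (ℙ : Measure Ω).real {ω | t ≤ C ω} = G t := by
    rw [measureReal_le_eq_measureReal_lt (hGreal ▸ hGcont.continuousWithinAt), hGreal]
  have hweight : (fun ω =>
      (if Y ω ≤ C ω then (1 : ℝ) else 0) * min (Y ω) (C ω) / G (min (Y ω) (C ω)))
      = fun ω => if Y ω ≤ C ω then Y ω / G (Y ω) else 0 := by
    funext ω
    split_ifs with h <;> simp [h]
  rw [hweight] at hint ⊢
  exact condExp_ite_le_div_ae_eq_condExp hX hY hC hind hGle hpos hYint hint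
end

section
/- Let (Y_i) and (C_i) be two sequences of random variables that are α-mixing with coefficients α₁(n) and α₂(n) respectively, and assume the two sequences are independent of each other. Then the sequence T_i = Y_i ∧ C_i is α-mixing with coefficient α(n) ≤ 4 max(α₁(n), α₂(n)). -/
open MeasureTheory ProbabilityTheory Set

/-!
By independence, the joint law of the two sequences is a product measure `μ ⊗ ν` on `X × Z`.
For `A, B` in the product σ-algebras, with sections `A_x` and `A^z`,
`P(A ∩ B) - P(A) P(B) = ∫ (ν(A_x ∩ B_x) - ν(A_x) ν(B_x)) dμ(x)`
`  + ∫∫ (μ(A^z ∩ B^z') - μ(A^z) μ(B^z')) dν(z) dν(z')`,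
because `∫ ν(A_x) ν(B_x) dμ(x)` and `∫∫ μ(A^z ∩ B^z') dν(z) dν(z')` both compute the
`μ ⊗ ν ⊗ ν`-measure of `{(x, z, z') | (x, z) ∈ A ∧ (x, z') ∈ B}`. The sections lie in the past and
future σ-algebras of a single sequence, so the two integrands are bounded by `α₂(n)` and `α₁(n)`.
Hence `α(n) ≤ α₁(n) + α₂(n)`, each `T_i` being a measurable function of `(Y_i, C_i)`.
-/

/-- The σ-algebra generated by `Z_a, …, Z_b`. -/
def sigmaIcc15 {Ω : Type*} (Z : ℕ → Ω → ℝ) (a b : ℕ) : MeasurableSpace Ω :=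
  ⨆ i ∈ Icc a b, MeasurableSpace.comap (Z i) inferInstance

/-- The σ-algebra generated by `Z_a, Z_{a+1}, …`. -/
def sigmaIci15 {Ω : Type*} (Z : ℕ → Ω → ℝ) (a : ℕ) : MeasurableSpace Ω :=
  ⨆ i ∈ Ici a, MeasurableSpace.comap (Z i) inferInstance

namespace MeasureTheory.Measure

variable {X Z : Type*} [MeasurableSpace X] [MeasurableSpace Z] {s : Set (X × Z)}

theorem measureReal_prod_apply {μ : Measure X} {ν : Measure Z} [IsFiniteMeasure ν]
    (hs : MeasurableSet s) : (μ.prod ν).real s = ∫ x, ν.real (Prod.mk x ⁻¹' s) ∂μ := by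
  rw [measureReal_def, prod_apply hs, ← integral_toReal
    (measurable_measure_prodMk_left hs).aemeasurable (ae_of_all _ fun _ => measure_lt_top _ _)]
  rfl

theorem measureReal_prod_apply_symm {μ : Measure X} {ν : Measure Z} [IsFiniteMeasure μ]
    [SFinite ν] (hs : MeasurableSet s) :
    (μ.prod ν).real s = ∫ z, μ.real ((fun x => (x, z)) ⁻¹' s) ∂ν := by
  rw [measureReal_def, prod_apply_symm hs, ← integral_toReal
    (measurable_measure_prodMk_right hs).aemeasurable (ae_of_all _ fun _ => measure_lt_top _ _)]
  rfl

theorem integral_measureReal_prodMk_mul {μ : Measure X} {ν : Measure Z} [IsFiniteMeasure μ]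
    [IsFiniteMeasure ν] {A B : Set (X × Z)} (hA : MeasurableSet A) (hB : MeasurableSet B) :
    ∫ x, ν.real (Prod.mk x ⁻¹' A) * ν.real (Prod.mk x ⁻¹' B) ∂μ =
      ∫ w, μ.real ((fun x => (x, w.1)) ⁻¹' A ∩ (fun x => (x, w.2)) ⁻¹' B) ∂(ν.prod ν) := by
  set D := (fun p : X × Z × Z => ((p.1, p.2.1), (p.1, p.2.2))) ⁻¹' (A ×ˢ B)
  have hD : MeasurableSet D := (by fun_prop : Measurable _) (hA.prod hB)
  calc ∫ x, ν.real (Prod.mk x ⁻¹' A) * ν.real (Prod.mk x ⁻¹' B) ∂μ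
      = ∫ x, (ν.prod ν).real (Prod.mk x ⁻¹' D) ∂μ := by
        simp_rw [← measureReal_prod_prod]; rfl
    _ = (μ.prod (ν.prod ν)).real D := (measureReal_prod_apply hD).symm
    _ = _ := measureReal_prod_apply_symm hD

theorem integrable_measureReal_prodMk_inter {μ : Measure X} {ν : Measure Z} [IsFiniteMeasure μ]
    [IsFiniteMeasure ν] {A B : Set (X × Z)} (hA : MeasurableSet A) (hB : MeasurableSet B) :
    Integrable (fun w => μ.real ((fun x => (x, w.1)) ⁻¹' A ∩ (fun x => (x, w.2)) ⁻¹' B))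
      (ν.prod ν) := by
  have hD : MeasurableSet ((fun p : X × Z × Z => ((p.1, p.2.1), (p.1, p.2.2))) ⁻¹' (A ×ˢ B)) :=
    (by fun_prop : Measurable _) (hA.prod hB)
  exact integrable_measure_prodMk_left (measurable_swap hD) (measure_ne_top _ _)

end MeasureTheory.Measure

theorem MeasureTheory.abs_integral_sub_integral_le {α : Type*} [MeasurableSpace α]
    {μ : Measure α} [IsProbabilityMeasure μ] {f g : α → ℝ} (hf : Integrable f μ)
    (hg : Integrable g μ) {c : ℝ} (h : ∀ x, |f x - g x| ≤ c) :
    |∫ x, f x ∂μ - ∫ x, g x ∂μ| ≤ c := by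
  simpa [integral_sub hf hg] using norm_integral_le_of_norm_le_const (μ := μ)
    (ae_of_all _ fun x => (Real.norm_eq_abs _).trans_le (h x))

open MeasureTheory.Measure

/-- `AlphaMixingLE F G μ a` says that the strong mixing coefficient
`α(F, G) = sup {|μ (S ∩ T) - μ S * μ T| : S ∈ F, T ∈ G}` is at most `a`. -/
def AlphaMixingLE {Ω : Type*} (F G : MeasurableSpace Ω) {_ : MeasurableSpace Ω} (μ : Measure Ω)
    (a : ℝ) : Prop :=
  ∀ S T, MeasurableSet[F] S → MeasurableSet[G] T → |μ.real (S ∩ T) - μ.real S * μ.real T| ≤ a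

namespace AlphaMixingLE

variable {Ω : Type*} {F G : MeasurableSpace Ω} {mΩ : MeasurableSpace Ω} {μ : Measure Ω} {a : ℝ}

theorem nonneg (h : AlphaMixingLE F G μ a) : 0 ≤ a := by
  simpa using h ∅ ∅ (@MeasurableSet.empty _ F) (@MeasurableSet.empty _ G)

theorem mono {F' G' : MeasurableSpace Ω} (h : AlphaMixingLE F G μ a) (hF : F' ≤ F) (hG : G' ≤ G) :
    AlphaMixingLE F' G' μ a :=
  fun S T hS hT => h S T (hF S hS) (hG T hT)

end AlphaMixingLE

theorem alphaMixingLE_map_iff {Ω E : Type*} {F G : MeasurableSpace E} {mΩ : MeasurableSpace Ω}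
    {mE : MeasurableSpace E} {μ : Measure Ω} {a : ℝ} {Φ : Ω → E} (hΦ : Measurable Φ)
    (hF : F ≤ mE) (hG : G ≤ mE) :
    AlphaMixingLE F G (μ.map Φ) a ↔ AlphaMixingLE (F.comap Φ) (G.comap Φ) μ a := by
  constructor
  · rintro h _ _ ⟨S, hS, rfl⟩ ⟨T, hT, rfl⟩
    simpa [map_measureReal_apply hΦ, hF S hS, hG T hT, (hF S hS).inter (hG T hT)]
      using h S T hS hT
  · intro h S T hS hT
    simpa [map_measureReal_apply hΦ, hF S hS, hG T hT, (hF S hS).inter (hG T hT)]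
      using h _ _ ⟨S, hS, rfl⟩ ⟨T, hT, rfl⟩

theorem AlphaMixingLE.prod {X Z : Type*} {F₁ F₂ : MeasurableSpace X} {G₁ G₂ : MeasurableSpace Z}
    {mX : MeasurableSpace X} {mZ : MeasurableSpace Z} {μ : Measure X} {ν : Measure Z}
    [IsProbabilityMeasure μ] [IsProbabilityMeasure ν] {a b : ℝ} (hF₁ : F₁ ≤ mX) (hF₂ : F₂ ≤ mX)
    (hG₁ : G₁ ≤ mZ) (hG₂ : G₂ ≤ mZ) (ha : AlphaMixingLE F₁ F₂ μ a)
    (hb : AlphaMixingLE G₁ G₂ ν b) :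
    AlphaMixingLE (F₁.comap Prod.fst ⊔ G₁.comap Prod.snd) (F₂.comap Prod.fst ⊔ G₂.comap Prod.snd)
      (μ.prod ν) (a + b) := by
  intro A B hA hB
  have hA' : MeasurableSet A :=
    sup_le_sup (MeasurableSpace.comap_mono hF₁) (MeasurableSpace.comap_mono hG₁) A hA
  have hB' : MeasurableSet B :=
    sup_le_sup (MeasurableSpace.comap_mono hF₂) (MeasurableSpace.comap_mono hG₂) B hB
  have hνA := integrable_measure_prodMk_left (μ := μ) (ν := ν) hA' (measure_ne_top _ _)
  have hνB := integrable_measure_prodMk_left (μ := μ) (ν := ν) hB' (measure_ne_top _ _)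
  have hμA := integrable_measure_prodMk_left (μ := ν) (ν := μ) (measurable_swap hA')
    (measure_ne_top _ _)
  have hμB := integrable_measure_prodMk_left (μ := ν) (ν := μ) (measurable_swap hB')
    (measure_ne_top _ _)
  have hνAB : Integrable (fun x => ν.real (Prod.mk x ⁻¹' A) * ν.real (Prod.mk x ⁻¹' B)) μ :=
    hνA.mul_bdd hνB.aestronglyMeasurable (c := 1) (ae_of_all _ fun x => by
      rw [Real.norm_of_nonneg measureReal_nonneg]; exact measureReal_le_one)
  have h_left : |(μ.prod ν).real (A ∩ B)
      - ∫ x, ν.real (Prod.mk x ⁻¹' A) * ν.real (Prod.mk x ⁻¹' B) ∂μ| ≤ b := by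
    rw [measureReal_prod_apply (hA'.inter hB')]
    exact abs_integral_sub_integral_le
      (integrable_measure_prodMk_left (hA'.inter hB') (measure_ne_top _ _)) hνAB
      fun x => hb _ _ ((@measurable_prodMk_left X Z F₁ G₁ x) hA)
        ((@measurable_prodMk_left X Z F₂ G₂ x) hB)
  have h_right : |∫ x, ν.real (Prod.mk x ⁻¹' A) * ν.real (Prod.mk x ⁻¹' B) ∂μ
      - (μ.prod ν).real A * (μ.prod ν).real B| ≤ a := by
    rw [integral_measureReal_prodMk_mul hA' hB', measureReal_prod_apply_symm hA',
      measureReal_prod_apply_symm hB', ← integral_prod_mul]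
    exact abs_integral_sub_integral_le (integrable_measureReal_prodMk_inter hA' hB')
      (hμA.mul_prod hμB) fun w => ha _ _ ((@measurable_prodMk_right X Z F₁ G₁ w.1) hA)
        ((@measurable_prodMk_right X Z F₂ G₂ w.2) hB)
  calc _ ≤ _ := abs_sub_le _ _ _
    _ ≤ b + a := add_le_add h_left h_right
    _ = a + b := add_comm b a

theorem ProbabilityTheory.IndepFun.alphaMixingLE_comap_sup {Ω E₁ E₂ : Type*}
    {F₁ F₂ : MeasurableSpace E₁} {G₁ G₂ : MeasurableSpace E₂} {mΩ : MeasurableSpace Ω}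
    {m₁ : MeasurableSpace E₁} {m₂ : MeasurableSpace E₂} {μ : Measure Ω} [IsProbabilityMeasure μ]
    {f : Ω → E₁} {g : Ω → E₂} {a b : ℝ} (hfg : IndepFun f g μ) (hf : Measurable f)
    (hg : Measurable g)
    (hF₁ : F₁ ≤ m₁) (hF₂ : F₂ ≤ m₁) (hG₁ : G₁ ≤ m₂) (hG₂ : G₂ ≤ m₂)
    (ha : AlphaMixingLE (F₁.comap f) (F₂.comap f) μ a)
    (hb : AlphaMixingLE (G₁.comap g) (G₂.comap g) μ b) :
    AlphaMixingLE (F₁.comap f ⊔ G₁.comap g) (F₂.comap f ⊔ G₂.comap g) μ (a + b) := by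
  have := isProbabilityMeasure_map (μ := μ) hf.aemeasurable
  have := isProbabilityMeasure_map (μ := μ) hg.aemeasurable
  have h_law := ((alphaMixingLE_map_iff hf hF₁ hF₂).2 ha).prod hF₁ hF₂ hG₁ hG₂
    ((alphaMixingLE_map_iff hg hG₁ hG₂).2 hb)
  rw [← hfg.map_prod_eq_prod_map_map hf.aemeasurable hg.aemeasurable,
    alphaMixingLE_map_iff (hf.prodMk hg)
      (sup_le_sup (MeasurableSpace.comap_mono hF₁) (MeasurableSpace.comap_mono hG₁))
      (sup_le_sup (MeasurableSpace.comap_mono hF₂) (MeasurableSpace.comap_mono hG₂))] at h_law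
  simpa only [MeasurableSpace.comap_sup, MeasurableSpace.comap_comp, Function.comp_def] using h_law

theorem ProbabilityTheory.Indep.alphaMixingLE_sup {Ω : Type*}
    {M₁ M₂ F₁ F₂ G₁ G₂ : MeasurableSpace Ω} {mΩ : MeasurableSpace Ω} {μ : Measure Ω}
    [IsProbabilityMeasure μ] {a b : ℝ} (hM : Indep M₁ M₂ μ) (hM₁ : M₁ ≤ mΩ) (hM₂ : M₂ ≤ mΩ)
    (hF₁ : F₁ ≤ M₁) (hF₂ : F₂ ≤ M₁) (hG₁ : G₁ ≤ M₂) (hG₂ : G₂ ≤ M₂)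
    (ha : AlphaMixingLE F₁ F₂ μ a) (hb : AlphaMixingLE G₁ G₂ μ b) :
    AlphaMixingLE (F₁ ⊔ G₁) (F₂ ⊔ G₂) μ (a + b) := by
  -- `id` seen as a random element of `(Ω, M₁)` and of `(Ω, M₂)`
  have h_indep := (IndepFun_iff_Indep (mβ := M₁) (mγ := M₂) id id μ).2
    (by simpa only [MeasurableSpace.comap_id])
  have h_id := h_indep.alphaMixingLE_comap_sup (measurable_id'' hM₁) (measurable_id'' hM₂)
    hF₁ hF₂ hG₁ hG₂ (by simpa only [MeasurableSpace.comap_id])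
    (by simpa only [MeasurableSpace.comap_id])
  simpa only [MeasurableSpace.comap_id] using h_id

theorem MeasurableSpace.comap_comp₂_le {Ω β γ δ : Type*} [mβ : MeasurableSpace β]
    [mγ : MeasurableSpace γ] [mδ : MeasurableSpace δ] {op : β → γ → δ}
    (hop : Measurable (Function.uncurry op)) (f : Ω → β) (g : Ω → γ) :
    mδ.comap (fun ω => op (f ω) (g ω)) ≤ mβ.comap f ⊔ mγ.comap g :=
  Measurable.comap_le (hop.comp ((Measurable.of_comap_le le_sup_left).prodMk
    (Measurable.of_comap_le le_sup_right)))

theorem MeasurableSpace.biSup_comap_comp₂_le {ι Ω β γ δ : Type*} [mβ : MeasurableSpace β]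
    [mγ : MeasurableSpace γ] [mδ : MeasurableSpace δ] {op : β → γ → δ}
    (hop : Measurable (Function.uncurry op)) (f : ι → Ω → β) (g : ι → Ω → γ) (s : Set ι) :
    ⨆ i ∈ s, mδ.comap (fun ω => op (f i ω) (g i ω))
      ≤ (⨆ i ∈ s, mβ.comap (f i)) ⊔ ⨆ i ∈ s, mγ.comap (g i) :=
  iSup₂_le fun i hi => (comap_comp₂_le hop _ _).trans
    (sup_le_sup (le_iSup₂ (f := fun i _ => mβ.comap (f i)) i hi)
      (le_iSup₂ (f := fun i _ => mγ.comap (g i)) i hi))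

/-- Cai (2001), Lemma 2: if `(Y_i)` and `(C_i)` are α-mixing with coefficients `α₁, α₂`
and the two sequences are mutually independent, then `T_i = Y_i ∧ C_i` is α-mixing with
coefficient at most `4 max(α₁(n), α₂(n))`. -/
theorem stmt15 {Ω : Type*} [MeasureSpace Ω] [IsProbabilityMeasure (ℙ : Measure Ω)]
    (Y C : ℕ → Ω → ℝ) (hY : ∀ i, Measurable (Y i)) (hC : ∀ i, Measurable (C i))
    (hindep : Indep (⨆ i, MeasurableSpace.comap (Y i) inferInstance)
      (⨆ i, MeasurableSpace.comap (C i) inferInstance) (ℙ : Measure Ω))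
    (α₁ α₂ : ℕ → ℝ)
    (hα₁ : ∀ k n : ℕ, ∀ A B : Set Ω,
      MeasurableSet[sigmaIcc15 Y 1 k] A → MeasurableSet[sigmaIci15 Y (k + n)] B →
        |((ℙ : Measure Ω) (A ∩ B)).toReal
          - ((ℙ : Measure Ω) A).toReal * ((ℙ : Measure Ω) B).toReal| ≤ α₁ n)
    (hα₂ : ∀ k n : ℕ, ∀ A B : Set Ω,
      MeasurableSet[sigmaIcc15 C 1 k] A → MeasurableSet[sigmaIci15 C (k + n)] B →
        |((ℙ : Measure Ω) (A ∩ B)).toReal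
          - ((ℙ : Measure Ω) A).toReal * ((ℙ : Measure Ω) B).toReal| ≤ α₂ n) :
    ∀ k n : ℕ, ∀ A B : Set Ω,
      MeasurableSet[sigmaIcc15 (fun i ω => min (Y i ω) (C i ω)) 1 k] A →
      MeasurableSet[sigmaIci15 (fun i ω => min (Y i ω) (C i ω)) (k + n)] B →
        |((ℙ : Measure Ω) (A ∩ B)).toReal
          - ((ℙ : Measure Ω) A).toReal * ((ℙ : Measure Ω) B).toReal|
          ≤ 4 * max (α₁ n) (α₂ n) := by
  intro k n
  have h_past_future_le (Z : ℕ → Ω → ℝ) (s : Set ℕ) :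
      ⨆ i ∈ s, MeasurableSpace.comap (Z i) inferInstance
        ≤ ⨆ i, MeasurableSpace.comap (Z i) inferInstance :=
    iSup₂_le_iSup (· ∈ s) _
  have hY_mix : AlphaMixingLE (sigmaIcc15 Y 1 k) (sigmaIci15 Y (k + n)) ℙ (α₁ n) := hα₁ k n
  have hC_mix : AlphaMixingLE (sigmaIcc15 C 1 k) (sigmaIci15 C (k + n)) ℙ (α₂ n) := hα₂ k n
  have hT_mix := (hindep.alphaMixingLE_sup (iSup_le fun i => (hY i).comap_le)
    (iSup_le fun i => (hC i).comap_le) (h_past_future_le Y _) (h_past_future_le Y _)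
    (h_past_future_le C _) (h_past_future_le C _) hY_mix hC_mix).mono
    (MeasurableSpace.biSup_comap_comp₂_le (measurable_fst.min measurable_snd) Y C _)
    (MeasurableSpace.biSup_comap_comp₂_le (measurable_fst.min measurable_snd) Y C _)
  have hα₁_nonneg := hY_mix.nonneg
  intro A B hA hB
  exact (hT_mix A B hA hB).trans
    (by linarith [le_max_left (α₁ n) (α₂ n), le_max_right (α₁ n) (α₂ n)])
end
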